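/- arXiv:math/0104195 — 2 statements merged into one kernel-verified Lean document; each statement's English description precedes it below -/
import Mathlib

section
/- Let S_ξ ⊆ ω₁ (for ξ < ω₁) be arbitrary sets, let S = ∇_ξ S_ξ be their diagonal union, and let η̄ be a ladder system over S such that the restriction η̄↾S_ξ is avoidable для every ξ < ω₁. Then η̄ is avoidable. -/
open Set

/-- ω₁, the first uncountable ordinal. -/
noncomputable def omegaOne : Ordinal := (Cardinal.aleph 1).ord

/-- ω₂, the second uncountable ordinal. -/
noncomputable def omegaTwo : Ordinal := (Cardinal.aleph 2).ord

/-- The set of countable ordinals, i.e. ω₁ viewed as a set of ordinals. -/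
def omegaOneSet : Set Ordinal := {o | o < omegaOne}

/-- `A ⊆* B` iff `A \ B` is finite. -/
def AlmostSubset (A B : Set Ordinal) : Prop := (A \ B).Finite

/-- `A =* B` iff `A ⊆* B` and `B ⊆* A`. -/
def AlmostEq (A B : Set Ordinal) : Prop := AlmostSubset A B ∧ AlmostSubset B A

/-- A club subset of ω₁: a set of countable ordinals, unbounded in ω₁ and
closed (every nonzero δ < ω₁ which is a limit of members is a member). -/
def IsClub' (C : Set Ordinal) : Prop :=
  C ⊆ omegaOneSet ∧
  (∀ a < omegaOne, ∃ b ∈ C, a < b) ∧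
  (∀ δ, δ ≠ 0 → δ < omegaOne → (∀ a < δ, ∃ b ∈ C, a < b ∧ b < δ) → δ ∈ C)

/-- A stationary subset of ω₁: one meeting every club. -/
def Stationary (S : Set Ordinal) : Prop := ∀ C, IsClub' C → (S ∩ C).Nonempty

/-- A ladder system: for each δ in the domain (a set of countable limit ordinals),
a strictly increasing ω-sequence cofinal in δ. -/
structure Ladder where
  dom : Set Ordinal
  toFun : Ordinal → ℕ → Ordinal
  dom_lt : ∀ δ ∈ dom, δ < omegaOne
  mono : ∀ δ ∈ dom, StrictMono (toFun δ)
  lt : ∀ δ ∈ dom, ∀ n, toFun δ n < δ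
  cofinal : ∀ δ ∈ dom, ∀ a < δ, ∃ n, a < toFun δ n

/-- `[η_δ]`, the range of the ladder at δ. -/
def Ladder.lad (η : Ladder) (δ : Ordinal) : Set Ordinal := Set.range (η.toFun δ)

/-- The restriction `η̄↾A`, with domain `dom(η̄) ∩ A`. -/
def Ladder.restrict (η : Ladder) (A : Set Ordinal) : Ladder where
  dom := η.dom ∩ A
  toFun := η.toFun
  dom_lt := fun δ h => η.dom_lt δ h.1
  mono := fun δ h => η.mono δ h.1
  lt := fun δ h => η.lt δ h.1
  cofinal := fun δ h => η.cofinal δ h.1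

/-- η̄ is club-guessing iff every club C has some δ ∈ dom(η̄) with `[η_δ] ⊆* C`. -/
def ClubGuessing (η : Ladder) : Prop :=
  ∀ C, IsClub' C → ∃ δ ∈ η.dom, AlmostSubset (η.lad δ) C

/-- η̄ is strongly club-guessing iff for every club C there is a club D with
`[η_δ] ⊆* C` for all δ ∈ D ∩ dom(η̄). -/
def StronglyGuessing (η : Ladder) : Prop :=
  ∀ C, IsClub' C → ∃ D, IsClub' D ∧ ∀ δ ∈ D ∩ η.dom, AlmostSubset (η.lad δ) C

/-- A club C avoids η̄ iff `[η_δ] ∩ C` is finite for every δ ∈ dom(η̄) outside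
some non-stationary set. -/
def Avoids (C : Set Ordinal) (η : Ladder) : Prop :=
  IsClub' C ∧ ∃ N : Set Ordinal, ¬ Stationary N ∧
    ∀ δ ∈ η.dom, δ ∉ N → (η.lad δ ∩ C).Finite

/-- η̄ is avoidable iff some club avoids it. -/
def Avoidable (η : Ladder) : Prop := ∃ C, Avoids C η

/-- A set S ⊆ ω₁ is avoidable iff every ladder system over S is avoidable. -/
def AvoidableSet (S : Set Ordinal) : Prop := ∀ η : Ladder, η.dom ⊆ S → Avoidable η

/-- Two ladders are almost disjoint iff for some club C, `[η_δ] ∩ [μ_δ]` is finite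
for every δ ∈ C ∩ dom(η̄) ∩ dom(μ̄). -/
def AlmostDisjoint (η μ : Ladder) : Prop :=
  ∃ C, IsClub' C ∧ ∀ δ ∈ C ∩ (η.dom ∩ μ.dom), (η.lad δ ∩ μ.lad δ).Finite

/-- `η̄ ⊴ μ̄` : η̄ is a subladder of μ̄. -/
def Subladder (η μ : Ladder) : Prop :=
  ∃ C, IsClub' C ∧ C ∩ η.dom ⊆ μ.dom ∧
    ∀ δ ∈ C ∩ η.dom, AlmostSubset (η.lad δ) (μ.lad δ)

/-- η̄ is maximal for X iff dom(η̄) ⊆ X, η̄ is strongly club-guessing, and every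
ladder system over X almost disjoint from η̄ is avoidable. -/
def MaximalFor' (η : Ladder) (X : Set Ordinal) : Prop :=
  η.dom ⊆ X ∧ StronglyGuessing η ∧
    ∀ μ : Ladder, μ.dom ⊆ X → AlmostDisjoint μ η → Avoidable μ

/-- The diagonal union `∇_ξ A_ξ = {α < ω₁ : ∃ ξ < α, α ∈ A_ξ}`. -/
def diagUnion (A : Ordinal → Set Ordinal) : Set Ordinal :=
  {α | α < omegaOne ∧ ∃ ξ < α, α ∈ A ξ}

/-- H is S̄-small iff the set of i < ω₂ with H ∩ S_i stationary has size ≤ ℵ₁. -/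
def SSmall (S : Ordinal → Set Ordinal) (H : Set Ordinal) : Prop :=
  Cardinal.mk {i : Ordinal // i < omegaTwo ∧ Stationary (H ∩ S i)} ≤
    Cardinal.lift.{1,0} (Cardinal.aleph 1 : Cardinal.{0})

/-- Conditions A1–A5 for (S̄, η̄), with χ the family of maximal ladders from A3. -/
def CondA (S : Ordinal → Set Ordinal) (η : Ladder) (χ : Ordinal → Ladder) : Prop :=
  (∀ i < omegaTwo, S i ⊆ omegaOneSet ∧ Stationary (S i)) ∧
  (∀ i < omegaTwo, ∀ j < omegaTwo, i ≠ j → ¬ Stationary (S i ∩ S j)) ∧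
  -- A1
  (∀ i < omegaTwo, S i ⊆ η.dom) ∧
  -- A2
  (∀ μ : Ladder, AlmostDisjoint μ η → Avoidable μ) ∧
  -- A3
  (∀ i < omegaTwo, (χ i).dom = S i ∧ MaximalFor' (χ i) (S i)) ∧
  -- A4
  (∀ X : Set Ordinal, X ⊆ omegaOneSet →
      (∀ i < omegaTwo, ¬ Stationary (X ∩ S i)) → AvoidableSet X) ∧
  -- A5
  (∀ X : Set Ordinal, X ⊆ omegaOneSet → ¬ SSmall S X →
      ∀ ρ : Ladder, ρ.dom = X → Subladder ρ η →
        ∃ i, i < omegaTwo ∧ S i ⊆ X ∧ Subladder (χ i) ρ)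

lemma omegaOne_cof : omegaOne.cof = Cardinal.aleph 1 :=
  Cardinal.isRegular_aleph_one.cof_eq

lemma omegaOne_isLimit : Order.IsSuccLimit omegaOne :=
  Cardinal.isSuccLimit_ord (Cardinal.aleph0_le_aleph 1)

lemma succ_lt_omegaOne {a : Ordinal} (h : a < omegaOne) : a + 1 < omegaOne := by
  rw [Ordinal.add_one_eq_succ]; exact omegaOne_isLimit.succ_lt h

def dInter (F : Ordinal → Set Ordinal) : Set Ordinal :=
  {α | α < omegaOne ∧ ∀ ξ < α, α ∈ F ξ}

lemma isClub_dInter (F : Ordinal → Set Ordinal)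
    (hF : ∀ ξ < omegaOne, IsClub' (F ξ)) : IsClub' (dInter F) := by
  refine ⟨fun α hα => hα.1, ?_, ?_⟩
  · -- unbounded
    intro a ha
    have hg : ∀ ξ β : Ordinal, ∃ c, ξ < omegaOne → β < omegaOne →
        c ∈ F ξ ∧ β < c ∧ c < omegaOne := by
      intro ξ β
      by_cases h : ξ < omegaOne ∧ β < omegaOne
      · obtain ⟨c, hc, hbc⟩ := (hF ξ h.1).2.1 β h.2
        exact ⟨c, fun _ _ => ⟨hc, hbc, (hF ξ h.1).1 hc⟩⟩
      · exact ⟨0, fun h1 h2 => absurd ⟨h1, h2⟩ h⟩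
    choose g hg using hg
    set step : Ordinal → Ordinal :=
      fun β => max (β + 1) ((Ordinal.bsup β (fun ξ _ => g ξ β)) + 1) with hstepdef
    have hstep_lt : ∀ β < omegaOne, step β < omegaOne := by
      intro β hβ
      apply max_lt (succ_lt_omegaOne hβ)
      apply succ_lt_omegaOne
      apply Ordinal.bsup_lt_ord
      · rw [omegaOne_cof]; exact Cardinal.lt_ord.1 hβ
      · intro ξ hξ; exact (hg ξ β (hξ.trans hβ) hβ).2.2
    have hstep_gt : ∀ β, β < step β := fun β =>
      lt_of_lt_of_le (lt_add_one β) (le_max_left _ _)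
    set seq : ℕ → Ordinal := fun n => step^[n] (a + 1) with hseqdef
    have hseq_succ : ∀ n, seq (n + 1) = step (seq n) := by
      intro n; simp [hseqdef, Function.iterate_succ_apply']
    have hseq_lt : ∀ n, seq n < omegaOne := by
      intro n; induction n with
      | zero => exact succ_lt_omegaOne ha
      | succ n ih => rw [hseq_succ]; exact hstep_lt _ ih
    have hseq_mono : StrictMono seq := strictMono_nat_of_lt_succ <| by
      intro n; rw [hseq_succ]; exact hstep_gt _
    set b : Ordinal := ⨆ n, seq n with hbdef
    have hseq_le_b : ∀ n, seq n ≤ b := fun n => Ordinal.le_iSup seq n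
    have hseq_lt_b : ∀ n, seq n < b := fun n =>
      lt_of_lt_of_le (hseq_mono (Nat.lt_succ_self n)) (hseq_le_b (n + 1))
    have hb_lt : b < omegaOne := by
      apply Ordinal.iSup_lt_ord_lift
      · rw [omegaOne_cof]
        simpa using Cardinal.aleph0_lt_aleph_one
      · exact hseq_lt
    have hb_ne : b ≠ 0 := by
      have : (0 : Ordinal) < seq 0 := by
        simp [hseqdef]
      exact (lt_of_lt_of_le this (hseq_le_b 0)).ne'
    have hex : ∀ c < b, ∃ n, c < seq n := by
      intro c hc
      exact Ordinal.lt_iSup_iff.1 hc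
    refine ⟨b, ⟨hb_lt, ?_⟩, lt_of_lt_of_le (lt_add_one a) ((hseq_le_b 0).trans_eq' rfl)⟩
    intro ξ hξb
    have hξ : ξ < omegaOne := hξb.trans hb_lt
    apply (hF ξ hξ).2.2 b hb_ne hb_lt
    intro a' ha'
    obtain ⟨n₁, hn₁⟩ := hex ξ hξb
    obtain ⟨n₂, hn₂⟩ := hex a' ha'
    set n := max n₁ n₂ with hn
    have hξn : ξ < seq n := hn₁.trans_le (hseq_mono.monotone (le_max_left _ _))
    have ha'n : a' < seq n := hn₂.trans_le (hseq_mono.monotone (le_max_right _ _))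
    have hgfact := hg ξ (seq n) hξ (hseq_lt n)
    refine ⟨g ξ (seq n), hgfact.1, ha'n.trans hgfact.2.1, ?_⟩
    have : g ξ (seq n) < step (seq n) := by
      calc g ξ (seq n) ≤ Ordinal.bsup (seq n) (fun ζ _ => g ζ (seq n)) :=
            Ordinal.le_bsup _ ξ hξn
        _ < _ := lt_of_lt_of_le (lt_add_one _) (le_max_right _ _)
    exact lt_of_lt_of_le (this.trans_le (hseq_succ n ▸ hseq_le_b (n+1))) le_rfl
  · -- closed
    intro δ hδ0 hδ1 hlim
    refine ⟨hδ1, fun ξ hξ => ?_⟩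
    apply (hF ξ (hξ.trans hδ1)).2.2 δ hδ0 hδ1
    intro a ha
    obtain ⟨b, hb, hab, hbδ⟩ := hlim (max ξ a) (max_lt hξ ha)
    exact ⟨b, hb.2 ξ (lt_of_le_of_lt (le_max_left _ _) hab),
      lt_of_le_of_lt (le_max_right _ _) hab, hbδ⟩

/-- If η̄ is a ladder over the diagonal union S = ∇_ξ S_ξ and every restriction
`η̄↾S_ξ` is avoidable, then η̄ is avoidable. -/
theorem stmt2 (S : Ordinal → Set Ordinal) (η : Ladder)
    (hdom : η.dom = diagUnion S)
    (hav : ∀ ξ < omegaOne, Avoidable (η.restrict (S ξ))) :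
    Avoidable η := by
  -- choose, for each ξ < ω₁: a club Cξ, a set Nξ, a club Dξ disjoint from Nξ
  have key : ∀ ξ : Ordinal, ∃ T : (Set Ordinal × Set Ordinal) × Set Ordinal,
      ξ < omegaOne →
      IsClub' T.1.1 ∧ IsClub' T.1.2 ∧ (∀ δ ∈ T.2, δ ∉ T.1.2) ∧
      ∀ δ ∈ η.dom, δ ∈ S ξ → δ ∉ T.2 → (η.lad δ ∩ T.1.1).Finite := by
    intro ξ
    by_cases hξ : ξ < omegaOne
    · obtain ⟨C, hC, N, hN, hfin⟩ := hav ξ hξ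
      unfold Stationary at hN
      push_neg at hN
      obtain ⟨D, hD, hND⟩ := hN
      refine ⟨((C, D), N), fun _ => ⟨hC, hD, ?_, ?_⟩⟩
      · exact fun δ h1 h2 => (Set.eq_empty_iff_forall_notMem.1 hND δ) ⟨h1, h2⟩
      · exact fun δ h1 h2 h3 => hfin δ ⟨h1, h2⟩ h3
    · exact ⟨((∅, ∅), ∅), fun h => absurd h hξ⟩
  choose T hT using key
  set Cf : Ordinal → Set Ordinal := fun ξ => (T ξ).1.1 with hCf
  set Df : Ordinal → Set Ordinal := fun ξ => (T ξ).1.2 with hDf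
  set Nf : Ordinal → Set Ordinal := fun ξ => (T ξ).2 with hNf
  set C : Set Ordinal := dInter Cf with hC
  set N : Set Ordinal := {δ | δ < omegaOne ∧ ∃ ξ < δ, δ ∈ Nf ξ} with hN
  refine ⟨C, isClub_dInter Cf (fun ξ hξ => (hT ξ hξ).1), N, ?_, ?_⟩
  · -- N is non-stationary, witnessed by the diagonal intersection of the Dξ's
    intro hst
    obtain ⟨δ, hδN, hδD⟩ := hst (dInter Df) (isClub_dInter Df (fun ξ hξ => (hT ξ hξ).2.1))
    obtain ⟨hδ1, ξ, hξδ, hδNf⟩ := hδN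
    exact (hT ξ (hξδ.trans hδ1)).2.2.1 δ hδNf (hδD.2 ξ hξδ)
  · intro δ hδ hδN
    have hδ1 : δ < omegaOne := η.dom_lt δ hδ
    obtain ⟨-, ξ, hξδ, hδS⟩ := hdom ▸ hδ
    have hδNf : δ ∉ Nf ξ := fun h => hδN ⟨hδ1, ξ, hξδ, h⟩
    have hfin : (η.lad δ ∩ Cf ξ).Finite :=
      (hT ξ (hξδ.trans hδ1)).2.2.2 δ hδ hδS hδNf
    -- only finitely many ladder points are ≤ ξ
    obtain ⟨m, hm⟩ := η.cofinal δ hδ ξ hξδ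
    have hsub : η.lad δ ∩ C ⊆ (η.lad δ ∩ Cf ξ) ∪ (η.toFun δ '' {n | n < m}) := by
      rintro α ⟨⟨n, rfl⟩, hαC⟩
      by_cases hle : ξ < η.toFun δ n
      · exact Or.inl ⟨⟨n, rfl⟩, hαC.2 ξ hle⟩
      · push_neg at hle
        exact Or.inr ⟨n, (η.mono δ hδ).lt_iff_lt.1 (lt_of_le_of_lt hle hm), rfl⟩
    exact Set.Finite.subset (hfin.union ((Set.finite_Iio m).image _)) hsub
end

section
/- (Lemma 2.1(3)) Assume conditions A1–A5 hold for (S̄, η̄). If μ̄ ⊴ η̄ is a strongly club-guessing ladder system, then dom(μ̄) is S̄-small. -/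
open Set

section Aux

/-- A non-stationary set is disjoint from some club. -/
lemma exists_club_disjoint_of_not_stationary {N : Set Ordinal}
    (h : ¬ Stationary N) : ∃ C, IsClub' C ∧ ∀ x ∈ C, x ∉ N := by
  unfold Stationary at h
  push_neg at h
  obtain ⟨C, hC, hCN⟩ := h
  exact ⟨C, hC, fun x hx hxN => by
    have : x ∈ N ∩ C := ⟨hxN, hx⟩
    rw [hCN] at this
    exact this⟩

/-- The intersection of two clubs is a club. -/
lemma isClub_inter {C D : Set Ordinal} (hC : IsClub' C) (hD : IsClub' D) :
    IsClub' (C ∩ D) := by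
  classical
  obtain ⟨hCs, hCu, hCc⟩ := hC
  obtain ⟨hDs, hDu, hDc⟩ := hD
  refine ⟨fun x hx => hCs hx.1, ?_, ?_⟩
  · intro a ha
    set uC : Ordinal → Ordinal :=
      fun x => if h : x < omegaOne then (hCu x h).choose else 0 with huCdef
    set uD : Ordinal → Ordinal :=
      fun x => if h : x < omegaOne then (hDu x h).choose else 0 with huDdef
    have huC : ∀ x, x < omegaOne → uC x ∈ C ∧ x < uC x := by
      intro x h
      have := (hCu x h).choose_spec
      simp only [huCdef, dif_pos h]
      exact this
    have huD : ∀ x, x < omegaOne → uD x ∈ D ∧ x < uD x := by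
      intro x h
      have := (hDu x h).choose_spec
      simp only [huDdef, dif_pos h]
      exact this
    set f : ℕ → Ordinal :=
      fun n => Nat.rec (motive := fun _ => Ordinal) (uC a) (fun _ x => uC (uD x)) n with hfdef
    have key : ∀ n, f n ∈ C ∧ f n < omegaOne := by
      intro n
      induction n with
      | zero =>
        have h1 := (huC a ha).1
        exact ⟨h1, hCs h1⟩
      | succ n ih =>
        have hD1 := huD _ ih.2
        have h2 : uD (f n) < omegaOne := hDs hD1.1
        have h3 := (huC _ h2).1
        exact ⟨h3, hCs h3⟩
    have hstep : ∀ n, f n < uD (f n) ∧ uD (f n) ∈ D ∧ uD (f n) < f (n + 1) := by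
      intro n
      have h1 := huD _ (key n).2
      have h2 := huC _ (hDs h1.1)
      exact ⟨h1.2, h1.1, h2.2⟩
    have hmono : ∀ n, f n < f (n + 1) := fun n =>
      lt_trans (hstep n).1 (hstep n).2.2
    set δ : Ordinal := ⨆ n, f n with hδdef
    have hle : ∀ n, f n ≤ δ := Ordinal.le_iSup f
    have hlt : ∀ n, f n < δ := fun n => lt_of_lt_of_le (hmono n) (hle (n + 1))
    have hδω : δ < omegaOne := by
      refine Ordinal.iSup_lt_ord_lift ?_ fun n => (key n).2
      rw [omegaOne, Cardinal.isRegular_aleph_one.cof_eq, Cardinal.mk_nat,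
        Cardinal.lift_aleph0]
      exact Cardinal.aleph0_lt_aleph_one
    have hδ0 : δ ≠ 0 := by
      have : (0 : Ordinal) ≤ f 0 := zero_le
      exact (lt_of_le_of_lt this (hlt 0)).ne'
    have hδC : δ ∈ C := by
      refine hCc δ hδ0 hδω ?_
      intro a' ha'
      obtain ⟨n, hn⟩ := (Ordinal.lt_iSup_iff).1 ha'
      exact ⟨f n, (key n).1, hn, hlt n⟩
    have hδD : δ ∈ D := by
      refine hDc δ hδ0 hδω ?_
      intro a' ha'
      obtain ⟨n, hn⟩ := (Ordinal.lt_iSup_iff).1 ha'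
      exact ⟨uD (f n), (hstep n).2.1, lt_trans hn (hstep n).1,
        lt_of_lt_of_le (hstep n).2.2 (hle (n + 1))⟩
    exact ⟨δ, ⟨hδC, hδD⟩, lt_trans (huC a ha).2 (hlt 0)⟩
  · intro δ h0 h1 hap
    refine ⟨hCc δ h0 h1 ?_, hDc δ h0 h1 ?_⟩
    · intro a ha
      obtain ⟨b, hb, h⟩ := hap a ha
      exact ⟨b, hb.1, h⟩
    · intro a ha
      obtain ⟨b, hb, h⟩ := hap a ha
      exact ⟨b, hb.2, h⟩

end Aux

/-- Lemma 2.1(3): under A1–A5, if μ̄ ⊴ η̄ is strongly club-guessing then dom(μ̄)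
is S̄-small. -/
theorem stmt13 (S : Ordinal → Set Ordinal) (η : Ladder) (χ : Ordinal → Ladder)
    (hA : CondA S η χ) (μ : Ladder) (hsub : Subladder μ η)
    (hμ : StronglyGuessing μ) :
    SSmall S μ.dom := by
  by_contra hns
  have hXsub : μ.dom ⊆ omegaOneSet := fun δ h => μ.dom_lt δ h
  -- ρ : the "even part" of μ
  set ρ : Ladder :=
    { dom := μ.dom
      toFun := fun δ n => μ.toFun δ (2 * n)
      dom_lt := μ.dom_lt
      mono := fun δ hδ a b h => μ.mono δ hδ (by omega)
      lt := fun δ hδ n => μ.lt δ hδ _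
      cofinal := fun δ hδ a ha => by
        obtain ⟨n, hn⟩ := μ.cofinal δ hδ a ha
        exact ⟨n, lt_of_lt_of_le hn ((μ.mono δ hδ).monotone (by omega))⟩ } with hρdef
  have hρη : Subladder ρ η := by
    obtain ⟨C₀, hC₀, hC₀sub, hC₀as⟩ := hsub
    refine ⟨C₀, hC₀, hC₀sub, ?_⟩
    intro δ hδ
    refine (hC₀as δ hδ).subset ?_
    rintro x ⟨⟨n, rfl⟩, hx⟩
    exact ⟨⟨2 * n, rfl⟩, hx⟩
  obtain ⟨i, hi2, hSiX, hχρ⟩ := hA.2.2.2.2.2.2 μ.dom hXsub hns ρ rfl hρη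
  have hSistat : Stationary (S i) := (hA.1 i hi2).2
  obtain ⟨hχdom, hmaxi⟩ := hA.2.2.2.2.1 i hi2
  -- ν : the "odd part" of μ, restricted to S i
  set ν : Ladder :=
    { dom := S i
      toFun := fun δ n => μ.toFun δ (2 * n + 1)
      dom_lt := fun δ h => μ.dom_lt δ (hSiX h)
      mono := fun δ hδ a b h => μ.mono δ (hSiX hδ) (by omega)
      lt := fun δ hδ n => μ.lt δ (hSiX hδ) _
      cofinal := fun δ hδ a ha => by
        obtain ⟨n, hn⟩ := μ.cofinal δ (hSiX hδ) a ha
        exact ⟨n, lt_of_lt_of_le hn ((μ.mono δ (hSiX hδ)).monotone (by omega))⟩ } with hνdef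
  have hνlad : ∀ δ, ν.lad δ = Set.range (fun n => μ.toFun δ (2 * n + 1)) := fun _ => rfl
  -- ν is almost disjoint from χ i
  have had : AlmostDisjoint ν (χ i) := by
    obtain ⟨C₁, hC₁, _, hC₁as⟩ := hχρ
    refine ⟨C₁, hC₁, ?_⟩
    rintro δ ⟨hδC₁, hδν, hδχ⟩
    have hfin : ((χ i).lad δ \ ρ.lad δ).Finite := hC₁as δ ⟨hδC₁, hδχ⟩
    refine hfin.subset ?_
    rintro x ⟨⟨n, rfl⟩, hxχ⟩
    refine ⟨hxχ, ?_⟩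
    rintro ⟨m, hm⟩
    have hinj := (μ.mono δ (hSiX hδν)).injective
    have : 2 * m = 2 * n + 1 := hinj hm
    omega
  -- by maximality of χ i, ν is avoidable
  have hνav : Avoidable ν := hmaxi.2.2 ν (fun x hx => hx) had
  obtain ⟨E, hEclub, N, hN, hEav⟩ := hνav
  -- μ strongly guesses E
  obtain ⟨D, hD, hDg⟩ := hμ E hEclub
  obtain ⟨F, hF, hFN⟩ := exists_club_disjoint_of_not_stationary hN
  obtain ⟨δ, hδSi, hδDF⟩ := hSistat (D ∩ F) (isClub_inter hD hF)
  have hδμ : δ ∈ μ.dom := hSiX hδSi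
  have h1 : (μ.lad δ \ E).Finite := hDg δ ⟨hδDF.1, hδμ⟩
  have h2 : (ν.lad δ ∩ E).Finite := hEav δ hδSi (hFN δ hδDF.2)
  have hsub' : ν.lad δ ⊆ μ.lad δ := by
    rintro x ⟨n, rfl⟩
    exact ⟨2 * n + 1, rfl⟩
  have hfin : (ν.lad δ).Finite := by
    refine (h2.union (h1.subset (Set.diff_subset_diff_left hsub'))).subset ?_
    intro x hx
    by_cases hE' : x ∈ E
    · exact Or.inl ⟨hx, hE'⟩
    · exact Or.inr ⟨hx, hE'⟩
  have hinf : (ν.lad δ).Infinite := by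
    rw [hνlad]
    refine Set.infinite_range_of_injective ?_
    intro a b h
    have := (μ.mono δ hδμ).injective h
    omega
  exact hinf hfin
end
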